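/- Let V be a finite-dimensional real vector space with a GCS given by a maximally isotropic complex subspace E ⊂ V_ℂ ⊕ V_ℂ* with E ∩ Ē = 0, and let W ⊆ V be any real subspace. Then the complex dimension of E_W equals the real dimension of W (so E_W is a maximally isotropic subspace of W_ℂ ⊕ W_ℂ*), and the complex dimension of E_{V/W} equals the real dimension of V/W. -/

import Mathlib

open Module LinearMap TensorProduct

/-- The complexification `V_ℂ = ℂ ⊗_ℝ V`. -/
abbrev Cxf (V : Type*) [AddCommGroup V] [Module ℝ V] := ℂ ⊗[ℝ] V

section Conj

variable (V : Type*) [AddCommGroup V] [Module ℝ V]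

/-- The complex conjugation on `V_ℂ = ℂ ⊗_ℝ V`. -/
noncomputable def conjC : Cxf V →ₗ[ℝ] Cxf V :=
  TensorProduct.map Complex.conjAe.toLinearMap LinearMap.id

lemma conjC_smul (c : ℂ) (x : Cxf V) :
    conjC V (c • x) = (starRingEnd ℂ c) • conjC V x := by
  induction x using TensorProduct.induction_on with
  | zero => simp
  | tmul a v =>
      simp [conjC, TensorProduct.smul_tmul', map_mul, Complex.conjAe_coe]
  | add x y hx hy =>
      simp [smul_add, map_add, hx, hy]

/-- The conjugation induced on the complex dual of `V_ℂ`. -/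
noncomputable def conjD : Module.Dual ℂ (Cxf V) →ₗ[ℝ] Module.Dual ℂ (Cxf V) where
  toFun f :=
    { toFun := fun x => starRingEnd ℂ (f (conjC V x))
      map_add' := by intro x y; simp [map_add]
      map_smul' := by intro c x; simp [conjC_smul, map_smul] }
  map_add' f g := by ext x; simp
  map_smul' r f := by ext x; simp

/-- The conjugation on `V_ℂ ⊕ V_ℂ*`. -/
noncomputable def conjP :
    (Cxf V × Module.Dual ℂ (Cxf V)) →ₗ[ℝ] (Cxf V × Module.Dual ℂ (Cxf V)) :=
  LinearMap.prodMap (conjC V) (conjD V)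

end Conj

section Pairing

variable (V : Type*) [AddCommGroup V] [Module ℝ V]

/-- The ℂ-bilinear extension of the standard pairing, on `V_ℂ ⊕ V_ℂ*`. -/
noncomputable def gcPairC (x y : Cxf V × Module.Dual ℂ (Cxf V)) : ℂ :=
  -(1/2) * (x.2 y.1 + y.2 x.1)

/-- A GCS on `V`, in terms of a maximally isotropic subspace `E ⊂ V_ℂ ⊕ V_ℂ*`
with `E ∩ Ē = 0`. -/
noncomputable def IsGCSSub [FiniteDimensional ℝ V]
    (E : Submodule ℂ (Cxf V × Module.Dual ℂ (Cxf V))) : Prop :=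
  (∀ x ∈ E, ∀ y ∈ E, gcPairC V x y = 0) ∧
  Module.finrank ℂ ↥E = Module.finrank ℝ V ∧
  (E.restrictScalars ℝ) ⊓ ((E.restrictScalars ℝ).map (conjP V)) = ⊥

end Pairing

section Induced

variable {V : Type*} [AddCommGroup V] [Module ℝ V]

/-- The complexified inclusion `W_ℂ → V_ℂ` of a real subspace `W ⊆ V`. -/
noncomputable def cxIncl (W : Submodule ℝ V) : Cxf ↥W →ₗ[ℂ] Cxf V :=
  LinearMap.baseChange ℂ W.subtype

/-- The subspace `E_W ⊆ W_ℂ ⊕ W_ℂ*` induced by `E ⊆ V_ℂ ⊕ V_ℂ*`: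
`E_W = {(w, f|_{W_ℂ}) : (w, f) ∈ E, w ∈ W_ℂ}`. -/
noncomputable def inducedSub (E : Submodule ℂ (Cxf V × Module.Dual ℂ (Cxf V)))
    (W : Submodule ℝ V) : Submodule ℂ (Cxf ↥W × Module.Dual ℂ (Cxf ↥W)) :=
  (E.comap ((cxIncl W).prodMap (LinearMap.id))).map
    ((LinearMap.id).prodMap ((cxIncl W).dualMap))

/-- `W` is a generalized complex subspace if `E_W ∩ Ē_W = 0`. -/
noncomputable def IsGCSubspace [FiniteDimensional ℝ V]
    (E : Submodule ℂ (Cxf V × Module.Dual ℂ (Cxf V))) (W : Submodule ℝ V) : Prop :=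
  ((inducedSub E W).restrictScalars ℝ) ⊓
    (((inducedSub E W).restrictScalars ℝ).map (conjP ↥W)) = ⊥

end Induced

/-- The subspace `E_{V/W} ⊆ (V/W)_ℂ ⊕ (V/W)_ℂ*` induced by `E ⊆ V_ℂ ⊕ V_ℂ*`:
`E_{V/W} = {(π(x), g) : (x, g ∘ π) ∈ E}` where `π : V_ℂ → (V/W)_ℂ`. -/
noncomputable def quotSub {V : Type*} [AddCommGroup V] [Module ℝ V]
    (E : Submodule ℂ (Cxf V × Module.Dual ℂ (Cxf V))) (W : Submodule ℝ V) :
    Submodule ℂ (Cxf (V ⧸ W) × Module.Dual ℂ (Cxf (V ⧸ W))) :=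
  (E.comap ((LinearMap.id).prodMap (LinearMap.baseChange ℂ W.mkQ).dualMap)).map
    ((LinearMap.baseChange ℂ W.mkQ).prodMap (LinearMap.id))

/-!
`E_W` is the linear reduction of the Lagrangian `E` along `F = W_ℂ ⊕ V_ℂ*`, whose orthogonal
for the pairing is `0 ⊕ Ann(W_ℂ) ⊆ F`; likewise `E_{V/W}` is the reduction along
`V_ℂ ⊕ Ann(ker π)`, whose orthogonal is `ker π ⊕ 0`. For a Lagrangian `L` of a nondegenerate
form on `P` and any `F`, the identity `(L + F)^⊥ = L ∩ F^⊥` gives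
`dim (L ∩ F) - dim (L ∩ F^⊥) = dim F - dim P / 2`, so the reduced space has dimension
`dim F - dim V`, that is `dim W`, resp. `dim V/W`.
-/

open Submodule

namespace LinearMap.BilinForm

theorem orthogonal_sup {R M : Type*} [CommSemiring R] [AddCommMonoid M] [Module R M]
    (B : LinearMap.BilinForm R M) (N N' : Submodule R M) :
    B.orthogonal (N ⊔ N') = B.orthogonal N ⊓ B.orthogonal N' := by
  refine le_antisymm (le_inf (orthogonal_le le_sup_left) (orthogonal_le le_sup_right)) ?_
  rintro m ⟨hN, hN'⟩ n hn
  obtain ⟨a, ha, b, hb, rfl⟩ := mem_sup.mp hn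
  rw [map_add, LinearMap.add_apply, hN a ha, hN' b hb, add_zero]

end LinearMap.BilinForm

theorem Submodule.finrank_map_add_finrank_inf_ker {K M N : Type*} [DivisionRing K]
    [AddCommGroup M] [Module K M] [AddCommGroup N] [Module K N] [FiniteDimensional K M]
    (f : M →ₗ[K] N) (p : Submodule K M) :
    finrank K (p.map f) + finrank K ↥(p ⊓ LinearMap.ker f) = finrank K p := by
  have h := LinearMap.finrank_range_add_finrank_ker (f.comp p.subtype)
  rwa [LinearMap.range_comp, range_subtype, LinearMap.ker_comp,
    (equivMapOfInjective _ p.injective_subtype _).finrank_eq, map_comap_subtype] at h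

namespace LinearMap.BilinForm

variable {K P : Type*} [Field K] [AddCommGroup P] [Module K P] [FiniteDimensional K P]
  {B : LinearMap.BilinForm K P} {L : Submodule K P}

theorem finrank_inf_add_finrank_of_lagrangian (hB : B.Nondegenerate)
    (hL : L ≤ B.orthogonal L) (hLdim : finrank K L + finrank K L = finrank K P)
    (F : Submodule K P) :
    finrank K ↥(L ⊓ F) + finrank K P =
      finrank K L + finrank K F + finrank K ↥(L ⊓ B.orthogonal F) := by
  have hLL : B.orthogonal L = L :=
    (eq_of_le_of_finrank_le hL (by rw [finrank_orthogonal hB]; omega)).symm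
  have hsup : B.orthogonal (L ⊔ F) = L ⊓ B.orthogonal F := by
    rw [orthogonal_sup, hLL]
  have hsup_add_inf := finrank_sup_add_finrank_inf_eq L F
  have horth := finrank_orthogonal hB (L ⊔ F)
  have hsup_le := Submodule.finrank_le (L ⊔ F)
  rw [hsup] at horth
  omega

/-- Linear reduction of a Lagrangian `L` along `F = range f`: when `f` carries `ker g` onto
`F^⊥`, the space `(L.comap f).map g` is `(L ⊓ F) / (L ⊓ F^⊥)`. -/
theorem finrank_map_comap_add_finrank_of_lagrangian {M N : Type*} [AddCommGroup M] [Module K M]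
    [AddCommGroup N] [Module K N] (hB : B.Nondegenerate)
    (hL : L ≤ B.orthogonal L) (hLdim : finrank K L + finrank K L = finrank K P)
    {f : M →ₗ[K] P} (hf : Function.Injective f) (g : M →ₗ[K] N)
    (hfg : (LinearMap.ker g).map f = B.orthogonal (LinearMap.range f)) :
    finrank K ((L.comap f).map g) + finrank K L = finrank K (LinearMap.range f) := by
  have : FiniteDimensional K M := Module.Finite.of_injective f hf
  have horth_le : B.orthogonal (LinearMap.range f) ≤ LinearMap.range f := hfg ▸ map_le_range
  have hcomap : finrank K (L.comap f) = finrank K ↥(L ⊓ LinearMap.range f) := by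
    rw [(equivMapOfInjective f hf _).finrank_eq, map_comap_eq, inf_comm]
  have hker : finrank K ↥(L.comap f ⊓ LinearMap.ker g) =
      finrank K ↥(L ⊓ B.orthogonal (LinearMap.range f)) := by
    rw [(equivMapOfInjective f hf _).finrank_eq, map_inf _ hf, map_comap_eq, hfg,
      inf_comm (LinearMap.range f), inf_assoc, inf_eq_right.mpr horth_le]
  have hrank := finrank_map_add_finrank_inf_ker g (L.comap f)
  have hlag := finrank_inf_add_finrank_of_lagrangian hB hL hLdim (LinearMap.range f)
  omega

end LinearMap.BilinForm

section ProdDualPairing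

variable (K U : Type*) [Field K] [AddCommGroup U] [Module K U]

noncomputable def prodDualPairing : LinearMap.BilinForm K (U × Module.Dual K U) :=
  LinearMap.BilinForm.congr (LinearEquiv.prodComm K (Module.Dual K U) U) (LinearMap.dualProd K U)

theorem finrank_prod_dual [FiniteDimensional K U] :
    finrank K (U × Module.Dual K U) = finrank K U + finrank K U := by
  rw [Module.finrank_prod, Subspace.dual_finrank_eq]

variable {K U}

@[simp]
theorem prodDualPairing_apply (x y : U × Module.Dual K U) :
    prodDualPairing K U x y = x.2 y.1 + y.2 x.1 := by
  simp [prodDualPairing, LinearMap.BilinForm.congr_apply, add_comm]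

theorem prodDualPairing_nondegenerate : (prodDualPairing K U).Nondegenerate :=
  .congr _ <| (LinearMap.isSymm_dualProd K U).isRefl.nondegenerate_iff_separatingLeft.mpr <|
    (LinearMap.separatingLeft_dualProd K U).mpr (Module.eval_apply_injective K)

theorem prodDualPairing_orthogonal_prod (A : Submodule K U) (D : Submodule K (Module.Dual K U)) :
    (prodDualPairing K U).orthogonal (A.prod D) = D.dualCoannihilator.prod A.dualAnnihilator := by
  ext ⟨v, g⟩
  simp only [LinearMap.BilinForm.mem_orthogonal_iff, mem_prod, mem_dualCoannihilator,
    mem_dualAnnihilator, Prod.forall, prodDualPairing_apply]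
  constructor
  · intro h
    exact ⟨fun d hd => by simpa using h 0 d ⟨A.zero_mem, hd⟩,
      fun a ha => by simpa using h a 0 ⟨ha, D.zero_mem⟩⟩
  · rintro ⟨hv, hg⟩ a d ⟨ha, hd⟩
    rw [hv d hd, hg a ha, add_zero]

open LinearMap

variable [FiniteDimensional K U] {L : Submodule K (U × Module.Dual K U)}

theorem finrank_map_comap_prodMap_dualMap (hL : L ≤ (prodDualPairing K U).orthogonal L)
    (hLdim : finrank K L = finrank K U) {S : Type*} [AddCommGroup S] [Module K S]
    {i : S →ₗ[K] U} (hi : Function.Injective i) :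
    finrank K ((L.comap (i.prodMap id)).map (id.prodMap i.dualMap)) = finrank K S := by
  have : FiniteDimensional K S := Module.Finite.of_injective i hi
  have hf : Function.Injective (i.prodMap (id : Module.Dual K U →ₗ[K] _)) :=
    hi.prodMap Function.injective_id
  have hrange : range (i.prodMap (id : Module.Dual K U →ₗ[K] _)) = (range i).prod ⊤ := by
    rw [range_prodMap, range_id]
  have hker : (ker (id.prodMap i.dualMap)).map (i.prodMap id) =
      (prodDualPairing K U).orthogonal (range (i.prodMap id)) := by
    rw [hrange, prodDualPairing_orthogonal_prod, ker_prodMap, ker_id,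
      ker_dualMap_eq_dualAnnihilator_range, prodMap_map_prod, Submodule.map_bot,
      Submodule.map_id, dualCoannihilator_top]
  have h := BilinForm.finrank_map_comap_add_finrank_of_lagrangian prodDualPairing_nondegenerate
    hL (by rw [finrank_prod_dual, hLdim]) hf _ hker
  rw [finrank_range_of_inj hf, Module.finrank_prod, Subspace.dual_finrank_eq, hLdim] at h
  omega

theorem finrank_map_comap_dualMap_prodMap (hL : L ≤ (prodDualPairing K U).orthogonal L)
    (hLdim : finrank K L = finrank K U) {Q : Type*} [AddCommGroup Q] [Module K Q]
    {p : U →ₗ[K] Q} (hp : Function.Surjective p) :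
    finrank K ((L.comap (id.prodMap p.dualMap)).map (p.prodMap id)) = finrank K Q := by
  have : FiniteDimensional K Q := Module.Finite.of_surjective p hp
  have hf : Function.Injective ((id : U →ₗ[K] U).prodMap p.dualMap) :=
    Function.injective_id.prodMap (dualMap_injective_of_surjective hp)
  have hrange : range ((id : U →ₗ[K] U).prodMap p.dualMap) =
      (⊤ : Submodule K U).prod (ker p).dualAnnihilator := by
    rw [range_prodMap, range_id, range_dualMap_eq_dualAnnihilator_ker]
  have hker : (ker (p.prodMap (id : Module.Dual K Q →ₗ[K] _))).map (id.prodMap p.dualMap) =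
      (prodDualPairing K U).orthogonal (range (id.prodMap p.dualMap)) := by
    rw [hrange, prodDualPairing_orthogonal_prod, ker_prodMap, ker_id, prodMap_map_prod,
      Submodule.map_bot, Submodule.map_id, Subspace.dualAnnihilator_dualCoannihilator_eq,
      dualAnnihilator_top]
  have h := BilinForm.finrank_map_comap_add_finrank_of_lagrangian prodDualPairing_nondegenerate
    hL (by rw [finrank_prod_dual, hLdim]) hf _ hker
  rw [finrank_range_of_inj hf, Module.finrank_prod, Subspace.dual_finrank_eq, hLdim] at h
  omega

end ProdDualPairing

theorem gcPairC_eq_prodDualPairing (V : Type*) [AddCommGroup V] [Module ℝ V]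
    (x y : Cxf V × Module.Dual ℂ (Cxf V)) :
    gcPairC V x y = -(1 / 2) * prodDualPairing ℂ (Cxf V) x y := by
  rw [gcPairC, prodDualPairing_apply]

theorem cxIncl_injective {V : Type*} [AddCommGroup V] [Module ℝ V] (W : Submodule ℝ V) :
    Function.Injective (cxIncl W) := by
  rw [cxIncl, LinearMap.baseChange_eq_ltensor]
  exact Module.Flat.lTensor_preserves_injective_linearMap _ W.injective_subtype

theorem finrank_inducedSub_and_quotSub
    (V : Type*) [AddCommGroup V] [Module ℝ V] [FiniteDimensional ℝ V]
    (E : Submodule ℂ (Cxf V × Module.Dual ℂ (Cxf V))) (hE : IsGCSSub V E)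
    (W : Submodule ℝ V) :
    Module.finrank ℂ ↥(inducedSub E W) = Module.finrank ℝ ↥W ∧
    Module.finrank ℂ ↥(quotSub E W) = Module.finrank ℝ (V ⧸ W) := by
  obtain ⟨hiso, hdim, -⟩ := hE
  have hL : E ≤ (prodDualPairing ℂ (Cxf V)).orthogonal E := fun y hy x hx => by
    simpa [gcPairC_eq_prodDualPairing] using hiso x hx y hy
  have hLdim : finrank ℂ E = finrank ℂ (Cxf V) := hdim.trans Module.finrank_baseChange.symm
  rw [← Module.finrank_baseChange (R := ℂ) (M' := W),
    ← Module.finrank_baseChange (R := ℂ) (M' := V ⧸ W)]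
  exact ⟨finrank_map_comap_prodMap_dualMap hL hLdim (cxIncl_injective W),
    finrank_map_comap_dualMap_prodMap hL hLdim
      (LinearMap.baseChange_surjective ℂ W.mkQ_surjective)⟩
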